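/- arXiv:1810.08157 — 2 statements merged into one kernel-verified Lean document; each statement's English description precedes it below -/
import Mathlib

section
/- Let A, B, A', B' be four vertices of the integer lattice Z^2 such that x(A') ≤ x(A), y(A') ≥ y(A), x(B') ≤ x(B), and y(B') ≥ y(B). If p is a north/east lattice path from A to B' and p' is a north/east lattice path from A' to B, then p and p' have a vertex in common. -/
namespace LatticePaths

/-- The endpoint of a north/east lattice path starting at `P`, encoded as a list of
steps (`true` = east-step `(i,j) → (i+1,j)`, `false` = north-step `(i,j) → (i,j+1)`). -/
def endpt : ℤ × ℤ → List Bool → ℤ × ℤ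
  | P, [] => P
  | P, true :: L => endpt (P.1 + 1, P.2) L
  | P, false :: L => endpt (P.1, P.2 + 1) L

/-- The set of vertices visited by a north/east lattice path starting at `P`. -/
def vertices : ℤ × ℤ → List Bool → Set (ℤ × ℤ)
  | P, [] => {P}
  | P, true :: L => insert P (vertices (P.1 + 1, P.2) L)
  | P, false :: L => insert P (vertices (P.1, P.2 + 1) L)

lemma endpt_mono (L : List Bool) : ∀ P : ℤ × ℤ,
    P.1 ≤ (endpt P L).1 ∧ P.2 ≤ (endpt P L).2 := by
  induction L with
  | nil => intro P; simp [endpt]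
  | cons b L ih =>
    intro P
    cases b <;> simp only [endpt]
    · obtain ⟨h1, h2⟩ := ih (P.1, P.2 + 1)
      simp only at h1 h2
      exact ⟨h1, by omega⟩
    · obtain ⟨h1, h2⟩ := ih (P.1 + 1, P.2)
      simp only at h1 h2
      exact ⟨by omega, h2⟩

lemma start_mem (P : ℤ × ℤ) (L : List Bool) : P ∈ vertices P L := by
  cases L with
  | nil => simp [vertices]
  | cons b L => cases b <;> simp [vertices]

lemma onPath_horiz (L : List Bool) : ∀ P V : ℤ × ℤ,
    P.2 = (endpt P L).2 → V.2 = P.2 → P.1 ≤ V.1 → V.1 ≤ (endpt P L).1 →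
    V ∈ vertices P L := by
  induction L with
  | nil =>
    intro P V h hv h1 h2
    simp only [endpt] at h1 h2
    have : V = P := Prod.ext (le_antisymm h2 h1) hv
    simp [vertices, this]
  | cons b L ih =>
    intro P V h hv h1 h2
    cases b
    · exfalso
      simp only [endpt] at h
      have := (endpt_mono L (P.1, P.2 + 1)).2
      simp at this; omega
    · simp only [endpt] at h h2
      simp only [vertices]
      by_cases hx : V.1 = P.1
      · left; exact Prod.ext hx hv
      · right
        exact ih (P.1 + 1, P.2) V h hv (by simp; omega) h2

lemma onPath_vert (L : List Bool) : ∀ P V : ℤ × ℤ,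
    P.1 = (endpt P L).1 → V.1 = P.1 → P.2 ≤ V.2 → V.2 ≤ (endpt P L).2 →
    V ∈ vertices P L := by
  induction L with
  | nil =>
    intro P V h hv h1 h2
    simp only [endpt] at h1 h2
    have : V = P := Prod.ext hv (le_antisymm h2 h1)
    simp [vertices, this]
  | cons b L ih =>
    intro P V h hv h1 h2
    cases b
    · simp only [endpt] at h h2
      simp only [vertices]
      by_cases hy : V.2 = P.2
      · left; exact Prod.ext hv hy
      · right
        exact ih (P.1, P.2 + 1) V h hv (by simp; omega) h2
    · exfalso
      simp only [endpt] at h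
      have := (endpt_mono L (P.1 + 1, P.2)).1
      simp at this; omega

lemma crossAux : ∀ n : ℕ, ∀ p p' : List Bool, p.length + p'.length ≤ n →
    ∀ A A' B B' : ℤ × ℤ, A'.1 ≤ A.1 → A.2 ≤ A'.2 → B'.1 ≤ B.1 → B.2 ≤ B'.2 →
    endpt A p = B' → endpt A' p' = B →
    (vertices A p ∩ vertices A' p').Nonempty := by
  intro n
  induction n with
  | zero =>
    intro p p' hlen A A' B B' hxA hyA hxB hyB hp hp'
    have hp0 : p = [] := by simpa using (List.length_eq_zero_iff.mp (by omega))
    have hp'0 : p' = [] := by simpa using (List.length_eq_zero_iff.mp (by omega))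
    subst hp0; subst hp'0
    simp only [endpt] at hp hp'
    subst hp; subst hp'
    refine ⟨A, ?_, ?_⟩
    · simp [vertices]
    · have : A = A' := Prod.ext (le_antisymm (by omega) hxA) (le_antisymm hyA (by omega))
      simp [vertices, this]
  | succ n ih =>
    intro p p' hlen A A' B B' hxA hyA hxB hyB hp hp'
    cases p with
    | nil =>
      -- B' = A
      simp only [endpt] at hp
      subst hp
      have hm := endpt_mono p' A'
      rw [hp'] at hm
      refine ⟨A, by simp [vertices], ?_⟩
      have h2 : A'.2 = B.2 := by omega
      exact onPath_horiz p' A' A (by rw [hp']; exact h2) (by omega) hxA (by rw [hp']; omega)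
    | cons b L =>
      cases b
      · -- north step from A
        simp only [endpt] at hp
        by_cases h : A.2 + 1 ≤ A'.2
        · obtain ⟨v, hv1, hv2⟩ := ih L p' (by simp at hlen ⊢; omega) (A.1, A.2 + 1) A' B B'
            (by simpa using hxA) (by simpa using h) hxB hyB hp hp'
          exact ⟨v, by simp only [vertices]; exact Set.mem_insert_of_mem _ hv1, hv2⟩
        · have heq : A.2 = A'.2 := le_antisymm hyA (by omega)
          cases p' with
          | nil =>
            -- B = A'
            simp only [endpt] at hp'
            subst hp'
            have hm := endpt_mono (false :: L) A
            rw [show endpt A (false :: L) = B' from by simp only [endpt]; exact hp] at hm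
            have hx : A.1 = B'.1 := by omega
            refine ⟨A', ?_, by simp [vertices]⟩
            have hpfull : endpt A (false :: L) = B' := by simp only [endpt]; exact hp
            exact onPath_vert (false :: L) A A' (by rw [hpfull]; exact hx)
              (by omega) hyA (by rw [hpfull]; omega)
          | cons b' L' =>
            cases b'
            · -- north step from A'
              simp only [endpt] at hp'
              obtain ⟨v, hv1, hv2⟩ := ih (false :: L) L' (by simp at hlen ⊢; omega)
                A (A'.1, A'.2 + 1) B B' (by simpa using hxA) (by simp; omega) hxB hyB
                (by simp only [endpt]; exact hp) hp'
              exact ⟨v, hv1, by simp only [vertices]; exact Set.mem_insert_of_mem _ hv2⟩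
            · -- east step from A'
              by_cases hx : A'.1 + 1 ≤ A.1
              · simp only [endpt] at hp'
                obtain ⟨v, hv1, hv2⟩ := ih (false :: L) L' (by simp at hlen ⊢; omega)
                  A (A'.1 + 1, A'.2) B B' (by simpa using hx) (by simp; omega) hxB hyB
                  (by simp only [endpt]; exact hp) hp'
                exact ⟨v, hv1, by simp only [vertices]; exact Set.mem_insert_of_mem _ hv2⟩
              · have : A = A' := Prod.ext (le_antisymm (by omega) hxA) heq
                exact ⟨A, start_mem A (false :: L), this ▸ start_mem A (true :: L')⟩
      · -- east step from A
        simp only [endpt] at hp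
        obtain ⟨v, hv1, hv2⟩ := ih L p' (by simp at hlen ⊢; omega) (A.1 + 1, A.2) A' B B'
          (by simp; omega) (by simpa using hyA) hxB hyB hp hp'
        exact ⟨v, by simp only [vertices]; exact Set.mem_insert_of_mem _ hv1, hv2⟩

/-- If `x(A') ≤ x(A)`, `y(A') ≥ y(A)`, `x(B') ≤ x(B)`, `y(B') ≥ y(B)`, then any
lattice path `p` from `A` to `B'` and any lattice path `p'` from `A'` to `B`
have a vertex in common. -/
theorem paths_must_cross (A B A' B' : ℤ × ℤ)
    (hxA : A'.1 ≤ A.1) (hyA : A.2 ≤ A'.2) (hxB : B'.1 ≤ B.1) (hyB : B.2 ≤ B'.2)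
    (p p' : List Bool) (hp : endpt A p = B') (hp' : endpt A' p' = B) :
    (vertices A p ∩ vertices A' p').Nonempty := by
  exact crossAux (p.length + p'.length) p p' le_rfl A A' B B' hxA hyA hxB hyB hp hp'

end LatticePaths
end

section
/- Let q be a queue (a subset of {1,...,n}) and u a word of length n on the positive integers. The word q(u) produced by the two-phase queue algorithm does not depend on the choice of ordering permutation (i_1,...,i_n), as long as u_{i_1} ≤ u_{i_2} ≤ ... ≤ u_{i_n} holds. -/
open scoped BigOperators Classical

namespace MLQ

/-- Words of length `n` over the positive integers (letters are natural numbers,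
with `0` unused). Sites are elements of `Fin n`, thought of cyclically. -/
abbrev Word (n : ℕ) := Fin n → ℕ

variable {n : ℕ}

section Cyclic

variable [NeZero n]

/-- the site `s` steps (cyclically) to the right of `i` -/
def shiftR (i : Fin n) (s : ℕ) : Fin n :=
  ⟨(i.val + s) % n, Nat.mod_lt _ (Nat.pos_of_ne_zero (NeZero.ne n))⟩

/-- the site `s` steps (cyclically) to the left of `i` -/
def shiftL (i : Fin n) (s : ℕ) : Fin n :=
  ⟨(i.val + n - s % n) % n, Nat.mod_lt _ (Nat.pos_of_ne_zero (NeZero.ne n))⟩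

/-- number of steps to go (cyclically) right from `i` to `j` -/
def cdistR (i j : Fin n) : ℕ := (j.val + n - i.val) % n

/-- number of steps to go (cyclically) left from `i` to `j` -/
def cdistL (i j : Fin n) : ℕ := (i.val + n - j.val) % n

/-- first site of `s` weakly to the right (cyclically) of `i` -/
noncomputable def firstRight (i : Fin n) (s : Finset (Fin n)) (h : s.Nonempty) : Fin n :=
  shiftR i ((s.image (cdistR i)).min' (h.image _))

/-- first site of `s` weakly to the left (cyclically) of `i` -/
noncomputable def firstLeft (i : Fin n) (s : Finset (Fin n)) (h : s.Nonempty) : Fin n :=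
  shiftL i ((s.image (cdistL i)).min' (h.image _))

/-- One step of Phase II of the queue algorithm: the state consists of the set of
still-unset sites of the queue together with the partial output word; processing
the letter at site `σ p`, it is placed (unchanged) on the first unset queue site
weakly to the right of `σ p`. -/
noncomputable def step2 (u : Word n) (σ : Equiv.Perm (Fin n))
    (st : Finset (Fin n) × Word n) (p : Fin n) : Finset (Fin n) × Word n :=
  if h : st.1.Nonempty then
    let j := firstRight (σ p) st.1 h
    (st.1.erase j, Function.update st.2 j (u (σ p)))
  else st

/-- One step of Phase I of the queue algorithm: processing the letter at site `σ p`,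
the letter `u (σ p) + 1` is placed on the first unset non-queue site weakly to the
left of `σ p`. -/
noncomputable def step1 (u : Word n) (σ : Equiv.Perm (Fin n))
    (st : Finset (Fin n) × Word n) (p : Fin n) : Finset (Fin n) × Word n :=
  if h : st.1.Nonempty then
    let j := firstLeft (σ p) st.1 h
    (st.1.erase j, Function.update st.2 j (u (σ p) + 1))
  else st

/-- The two-phase queue algorithm computing `q(u)`, using the ordering permutation `σ`
(so the letters are processed in the order `u (σ 0), u (σ 1), …`): Phase II processes
the `|q|` smallest letters in increasing order, Phase I processes the remaining
letters in decreasing order. -/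
noncomputable def queueActWith (q : Finset (Fin n)) (σ : Equiv.Perm (Fin n))
    (u : Word n) : Word n :=
  let s2 := ((List.finRange n).take q.card).foldl (step2 u σ) (q, fun _ => 0)
  let s1 := (((List.finRange n).drop q.card).reverse).foldl (step1 u σ) (qᶜ, s2.2)
  s1.2

/-- `σ` is a valid ordering permutation for the word `u`. -/
def IsSorting (u : Word n) (σ : Equiv.Perm (Fin n)) : Prop := Monotone (u ∘ σ)

/-- The action `q(u)` of a queue `q` on a word `u`, using the canonical sorting
permutation. -/
noncomputable def act (q : Finset (Fin n)) (u : Word n) : Word n :=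
  queueActWith q (Tuple.sort u) u

/-- The action of a tuple of queues `(q_1, …, q_k)` on a word (first `q_1`, then `q_2`, …). -/
noncomputable def mlqAct {k : ℕ} (qs : Fin k → Finset (Fin n)) (u : Word n) : Word n :=
  (List.ofFn qs).foldl (fun w q => act q w) u

end Cyclic

/-- the type of a word: `typeOf u i` is the number of occurrences of the letter `i`. -/
def typeOf (u : Word n) : ℕ → ℕ := fun i => (Finset.univ.filter (fun p => u p = i)).card

/-- partial sums `p_i(m) = m_1 + ⋯ + m_i` of a type -/
def psum (m : ℕ → ℕ) (i : ℕ) : ℕ := ∑ j ∈ Finset.Icc 1 i, m j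

/-- number of classes of a type: the largest `i` with `m i ≠ 0` -/
noncomputable def classes (m : ℕ → ℕ) : ℕ := sSup {i | m i ≠ 0}

/-- a packed word: all classes `1, …, ℓ` occur, where `ℓ` is the number of classes -/
def PackedWord (u : Word n) : Prop :=
  (∀ p, 1 ≤ u p) ∧ ∀ j, 1 ≤ j → j ≤ classes (typeOf u) → typeOf u j ≠ 0

/-- merging classes `i` and `i+1` in a word: all letters `> i` are decremented -/
def mergeWord (i : ℕ) (u : Word n) : Word n := fun p => if i < u p then u p - 1 else u p

/-- merging classes `i` and `i+1` in a type -/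
def mergeType (i : ℕ) (m : ℕ → ℕ) : ℕ → ℕ := fun j =>
  if j < i then m j else if j = i then m i + m (i + 1) else m (j + 1)

/-- `∨^(k)`: decrement all but the `k` smallest letters of a word (meaningful when
`k` is a partial sum of the type of the word). -/
def vee (k : ℕ) (u : Word n) : Word n := fun p =>
  if (Finset.univ.filter (fun q => u q ≤ u p)).card ≤ k then u p else u p - 1

/-- iterated merge `∨_T` (the merges `∨_t` are applied for `t ∈ T` in decreasing order) -/
def mergeWordT (T : Finset ℕ) (u : Word n) : Word n :=
  (T.sort (· ≤ ·)).foldr mergeWord u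

/-- iterated merge `∨_T` on types -/
def mergeTypeT (T : Finset ℕ) (m : ℕ → ℕ) : ℕ → ℕ :=
  (T.sort (· ≤ ·)).foldr mergeType m

/-- the weight of a queue, `∏_{j ∈ q} x_j` -/
noncomputable def qwt (q : Finset (Fin n)) : MvPolynomial (Fin n) ℤ :=
  ∏ j ∈ q, MvPolynomial.X j

/-- the `σ`-twisted spectral weight `⟨u⟩_σ` of a word `u`, with respect to a type `m`
with `k + 1` classes: the sum of the weights of all `σ`-twisted multiline queues
`(q_1, …, q_k)` of type `m` (i.e. `|q_i| = p_{σ(i)}(m)`) with `u = q(1^n)`. -/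
noncomputable def swt [NeZero n] (k : ℕ) (m : ℕ → ℕ) (σ : Equiv.Perm (Fin k))
    (u : Word n) : MvPolynomial (Fin n) ℤ :=
  ∑ qs ∈ Finset.univ.filter (fun qs : Fin k → Finset (Fin n) =>
      (∀ i, (qs i).card = psum m ((σ i : ℕ) + 1)) ∧ mlqAct qs (fun _ => 1) = u),
    ∏ i, qwt (qs i)

/-- the (ordinary) spectral weight `⟨u⟩` of a packed word -/
noncomputable def spec [NeZero n] (u : Word n) : MvPolynomial (Fin n) ℤ :=
  swt (classes (typeOf u) - 1) (typeOf u) (Equiv.refl _) u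

/-- the elementary symmetric polynomial `e_k(x_1, …, x_n)` -/
noncomputable def esym (n k : ℕ) : MvPolynomial (Fin n) ℤ :=
  ∑ t ∈ Finset.powersetCard k (Finset.univ : Finset (Fin n)), ∏ j ∈ t, MvPolynomial.X j

/-- the Gale order `A ⪰ B`: same cardinality, and the `k`-th largest element of `A`
is at least the `k`-th largest element of `B`, for every `k` -/
def Dom (A B : Finset ℕ) : Prop :=
  A.card = B.card ∧ ∀ k < A.card,
    (B.sort (· ≤ ·)).reverse.getD k 0 ≤ (A.sort (· ≤ ·)).reverse.getD k 0

/-- `A ≫ B`: every element of `A` exceeds every element of `B` -/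
def Gg (A B : Finset ℕ) : Prop := ∀ a ∈ A, ∀ b ∈ B, b < a

/-- a word is weakly decreasing up to level `t`: any two sites `p < q` with
`u q ≤ t` satisfy `u p ≥ u q` -/
def WDUpTo (t : ℕ) (u : Word n) : Prop :=
  ∀ p q : Fin n, p < q → u q ≤ t → u q ≤ u p

section Dual

variable [NeZero n]

/-- the cyclic interval `{i, i+1, …, i+t}` -/
def cycInterval (i : Fin n) (t : ℕ) : Finset (Fin n) :=
  (Finset.range (t + 1)).image (shiftR i)

/-- the cyclic interval starting at `i` of length `t` is balanced for the
configuration `(q₁, q₂)` -/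
def BalancedInterval (q1 q2 : Finset (Fin n)) (i : Fin n) (t : ℕ) : Prop :=
  (cycInterval i t ∩ q1).card = (cycInterval i t ∩ q2).card ∧
  ∀ l ≤ t, (cycInterval i l ∩ q2).card ≤ (cycInterval i l ∩ q1).card

/-- a site is balanced if it lies in some balanced interval; equivalently, its
parenthesis (if any) is matched in the cyclic parenthesis-matching of the
configuration -/
def BalancedSite (q1 q2 : Finset (Fin n)) (j : Fin n) : Prop :=
  ∃ i t, t < n ∧ BalancedInterval q1 q2 i t ∧ j ∈ cycInterval i t

/-- the dual configuration: balanced sites keep their memberships, unbalanced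
sites swap their memberships between the two queues -/
noncomputable def dualPair (q1 q2 : Finset (Fin n)) : Finset (Fin n) × Finset (Fin n) :=
  (Finset.univ.filter (fun j => if BalancedSite q1 q2 j then j ∈ q1 else j ∈ q2),
   Finset.univ.filter (fun j => if BalancedSite q1 q2 j then j ∈ q2 else j ∈ q1))

/-- the operator `s_i` on tuples of queues, replacing the (0-indexed) adjacent pair
`(q_i, q_{i+1})` by its dual configuration -/
noncomputable def sOp {k : ℕ} (i : ℕ) (qs : Fin k → Finset (Fin n)) :
    Fin k → Finset (Fin n) := fun j =>
  if h : i + 1 < k then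
    (if j.val = i then (dualPair (qs ⟨i, by omega⟩) (qs ⟨i + 1, h⟩)).1
     else if j.val = i + 1 then (dualPair (qs ⟨i, by omega⟩) (qs ⟨i + 1, h⟩)).2
     else qs j)
  else qs j

end Dual

/-!
Two letters of equal value can be processed in either order: each of them claims the first
free site in a fixed cyclic direction from its own position, and whether these two sites
coincide or not, the pair of claimed sites and the values written on them are the same for
both orders. At the junction of the two phases the exchanged letters are the last ones of
their phases, when only one free site is left, so their positions do not matter there
either. Finally, any two sorting orders are connected by exchanges of adjacent letters of
equal value.
-/

section AdjacentSwaps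

variable {α β γ : Type*}

inductive SwapStep (f : α → β) : List α → List α → Prop
  | swap (l₁ l₂ : List α) {x y : α} :
      f x = f y → SwapStep f (l₁ ++ x :: y :: l₂) (l₁ ++ y :: x :: l₂)

theorem SwapStep.length_eq {f : α → β} {l l' : List α} (h : SwapStep f l l') :
    l.length = l'.length := by
  cases h
  simp

theorem SwapStep.cons {f : α → β} {l l' : List α} (a : α) (h : SwapStep f l l') :
    SwapStep f (a :: l) (a :: l') := by
  cases h with
  | swap l₁ l₂ hxy => exact .swap (a :: l₁) l₂ hxy

theorem reflTransGen_swapStep_of_perm [LinearOrder β] {f : α → β} :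
    ∀ {l l' : List α}, l.Perm l' → l.Pairwise (f · ≤ f ·) → l'.Pairwise (f · ≤ f ·) →
      Relation.ReflTransGen (SwapStep f) l l' := by
  suffices key : ∀ k (l l' : List α), l.length = k → l.Perm l' → l.Pairwise (f · ≤ f ·) →
      l'.Pairwise (f · ≤ f ·) → Relation.ReflTransGen (SwapStep f) l l' from
    fun {l l'} hp hl hl' => key _ l l' rfl hp hl hl'
  have lift_cons (a : α) {l l' : List α} (h : Relation.ReflTransGen (SwapStep f) l l') :
      Relation.ReflTransGen (SwapStep f) (a :: l) (a :: l') :=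
    h.lift (a :: ·) fun _ _ => SwapStep.cons a
  intro k
  induction k with
  | zero =>
    intro l l' hk hp _ _
    obtain rfl := List.length_eq_zero_iff.1 hk
    rw [hp.symm.eq_nil]
  | succ k ih =>
    rintro (_ | ⟨x, t⟩) (_ | ⟨x', t'⟩) hk hp hl hl'
    · exact .refl
    · exact absurd hp.symm.eq_nil (List.cons_ne_nil _ _)
    · exact absurd hp.eq_nil (List.cons_ne_nil _ _)
    have ht : t.length = k := by simpa using hk
    by_cases hxx : x = x'
    · subst hxx
      exact lift_cons x (ih t t' ht hp.cons_inv hl.of_cons hl'.of_cons)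
    have hx't : x' ∈ t := by
      simpa [Ne.symm hxx] using hp.symm.subset List.mem_cons_self
    have hxt' : x ∈ t' := by
      simpa [hxx] using hp.subset List.mem_cons_self
    have hfx : f x = f x' :=
      le_antisymm (List.rel_of_pairwise_cons hl hx't) (List.rel_of_pairwise_cons hl' hxt')
    -- `x'` is moved to the front of the tail, then exchanged with `x`
    obtain ⟨a, b, rfl⟩ := List.append_of_mem hx't
    have hab : (a ++ b).Pairwise (f · ≤ f ·) :=
      hl.of_cons.sublist ((List.sublist_cons_self x' b).append_left a)
    have hfx_le : ∀ z ∈ a ++ b, f x ≤ f z := fun z hz =>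
      List.rel_of_pairwise_cons hl (by simp at hz ⊢; tauto)
    have step₁ : Relation.ReflTransGen (SwapStep f) (a ++ x' :: b) (x' :: (a ++ b)) :=
      ih _ _ ht List.perm_middle hl.of_cons
        (List.pairwise_cons.2 ⟨fun z hz => hfx ▸ hfx_le z hz, hab⟩)
    have hp' : (x :: (a ++ b)).Perm t' :=
      ((List.Perm.swap x x' _).trans ((List.perm_middle.symm.cons x).trans hp)).cons_inv
    have step₂ : Relation.ReflTransGen (SwapStep f) (x :: (a ++ b)) t' :=
      ih _ _ (by simp at ht ⊢; omega) hp' (List.pairwise_cons.2 ⟨hfx_le, hab⟩) hl'.of_cons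
    exact (lift_cons x step₁).tail (.swap [] _ hfx) |>.trans (lift_cons x' step₂)

theorem eq_of_perm_of_swapStep_invariant [LinearOrder β] {f : α → β} {F : List α → γ} {m : ℕ}
    (hF : ∀ l l', SwapStep f l l' → l.length = m → F l = F l') {l l' : List α}
    (hp : l.Perm l') (hl : l.Pairwise (f · ≤ f ·)) (hl' : l'.Pairwise (f · ≤ f ·))
    (hm : l.length = m) : F l = F l' := by
  have chain := reflTransGen_swapStep_of_perm hp hl hl'
  suffices F l = F l' ∧ l'.length = m from this.1
  clear hp hl hl'
  induction chain with
  | refl => exact ⟨rfl, hm⟩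
  | tail _ hstep ih => exact ⟨ih.1.trans (hF _ _ hstep ih.2), hstep.length_eq ▸ ih.2⟩

theorem foldl_append_swap {f : γ → α → γ} {x y : α} (h : ∀ b, f (f b x) y = f (f b y) x)
    (l₁ l₂ : List α) (b : γ) :
    (l₁ ++ x :: y :: l₂).foldl f b = (l₁ ++ y :: x :: l₂).foldl f b := by
  simp only [List.foldl_append, List.foldl_cons, h]

end AdjacentSwaps

section Nearest

variable {ι β : Type*} {d : ι → ι → ℕ}

def IsNearest (d : ι → ι → ℕ) (i : ι) (S : Finset ι) (j : ι) : Prop :=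
  j ∈ S ∧ ∀ s ∈ S, d i j ≤ d i s

/-- `d x s` behaves like the distance from `x` to `s` when walking around a cycle in a fixed
direction: passing through a point `j` that is not farther than `s` splits the walk. -/
structure IsCyclicDist (d : ι → ι → ℕ) : Prop where
  injective (i : ι) : Function.Injective (d i)
  add_of_le {x j s : ι} : d x j ≤ d x s → d x s = d x j + d j s

theorem IsNearest.eq (hd : IsCyclicDist d) {i j j' : ι} {S : Finset ι} (h : IsNearest d i S j)
    (h' : IsNearest d i S j') : j = j' :=
  hd.injective i (le_antisymm (h.2 _ h'.1) (h'.2 _ h.1))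

theorem isNearest_shift_min' {shift : ℕ → ι} {i : ι} (hshift : ∀ j, shift (d i j) = j)
    {S : Finset ι} (h : S.Nonempty) :
    IsNearest d i S (shift ((S.image (d i)).min' (h.image _))) := by
  obtain ⟨j, hj, hmin⟩ := Finset.mem_image.1 (Finset.min'_mem _ (h.image (d i)))
  rw [← hmin, hshift]
  exact ⟨hj, fun s hs => hmin ▸ Finset.min'_le _ _ (Finset.mem_image_of_mem _ hs)⟩

variable [DecidableEq ι]

theorem IsNearest.erase {i j k : ι} {S : Finset ι} (h : IsNearest d i S k) (hk : k ≠ j) :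
    IsNearest d i (S.erase j) k :=
  ⟨Finset.mem_erase.2 ⟨hk, h.1⟩, fun s hs => h.2 s (Finset.mem_of_mem_erase hs)⟩

/-- From `x` and from `y`, the walks to the other elements of `S` all pass through `j`. -/
theorem IsNearest.erase_of_isNearest (hd : IsCyclicDist d) {x y j k : ι} {S : Finset ι}
    (hx : IsNearest d x S j) (hy : IsNearest d y S j) (hk : IsNearest d x (S.erase j) k) :
    IsNearest d y (S.erase j) k := by
  refine ⟨hk.1, fun s hs => ?_⟩
  have hkS := Finset.mem_of_mem_erase hk.1
  have hsS := Finset.mem_of_mem_erase hs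
  have := hk.2 s hs
  rw [hd.add_of_le (hx.2 _ hkS), hd.add_of_le (hx.2 _ hsS)] at this
  rw [hd.add_of_le (hy.2 _ hkS), hd.add_of_le (hy.2 _ hsS)]
  omega

noncomputable def fillStep (near : ι → (S : Finset ι) → S.Nonempty → ι) (val : ι → β)
    (st : Finset ι × (ι → β)) (s : ι) : Finset ι × (ι → β) :=
  if h : st.1.Nonempty then
    (st.1.erase (near s st.1 h), Function.update st.2 (near s st.1 h) (val s))
  else st

variable {near : ι → (S : Finset ι) → S.Nonempty → ι} {val : ι → β}

theorem fillStep_empty (w : ι → β) (s : ι) : fillStep near val (∅, w) s = (∅, w) :=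
  dif_neg Finset.not_nonempty_empty

theorem fillStep_of_isNearest (hd : IsCyclicDist d)
    (hnear : ∀ i S h, IsNearest d i S (near i S h)) {s j : ι} {S : Finset ι} {w : ι → β}
    (hj : IsNearest d s S j) :
    fillStep near val (S, w) s = (S.erase j, Function.update w j (val s)) := by
  have hS : S.Nonempty := ⟨j, hj.1⟩
  rw [fillStep, dif_pos hS, (hnear s S hS).eq hd hj]

theorem card_foldl_fillStep (hnear : ∀ i S h, near i S h ∈ S) (L : List ι) :
    ∀ st : Finset ι × (ι → β), (L.foldl (fillStep near val) st).1.card = st.1.card - L.length := by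
  induction L with
  | nil => simp
  | cons a L ih =>
    rintro ⟨S, w⟩
    rw [List.foldl_cons, ih]
    rcases S.eq_empty_or_nonempty with rfl | hS
    · simp [fillStep_empty]
    · simp only [fillStep, dif_pos hS, Finset.card_erase_of_mem (hnear a S hS),
        List.length_cons]
      omega

theorem fillStep_comm (hd : IsCyclicDist d) (hnear : ∀ i S h, IsNearest d i S (near i S h))
    {x y : ι} (hxy : val x = val y) (st : Finset ι × (ι → β)) :
    fillStep near val (fillStep near val st x) y =
      fillStep near val (fillStep near val st y) x := by
  obtain ⟨S, w⟩ := st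
  rcases S.eq_empty_or_nonempty with rfl | hS
  · simp only [fillStep_empty]
  obtain ⟨jx, hjx⟩ : ∃ j, IsNearest d x S j := ⟨_, hnear x S hS⟩
  obtain ⟨jy, hjy⟩ : ∃ j, IsNearest d y S j := ⟨_, hnear y S hS⟩
  rw [fillStep_of_isNearest hd hnear hjx, fillStep_of_isNearest hd hnear hjy]
  by_cases hj : jx = jy
  · subst hj
    rcases (S.erase jx).eq_empty_or_nonempty with hE | hE
    · rw [hE, fillStep_empty, fillStep_empty, hxy]
    obtain ⟨k, hk⟩ : ∃ k, IsNearest d x (S.erase jx) k := ⟨_, hnear x _ hE⟩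
    rw [fillStep_of_isNearest hd hnear (IsNearest.erase_of_isNearest hd hjx hjy hk),
      fillStep_of_isNearest hd hnear hk, hxy]
  · rw [fillStep_of_isNearest hd hnear (hjy.erase (Ne.symm hj)),
      fillStep_of_isNearest hd hnear (hjx.erase hj), Finset.erase_right_comm,
      Function.update_comm hj]

theorem fillStep_eq_of_card_eq_one (hnear : ∀ i S h, near i S h ∈ S) {x y : ι}
    (hxy : val x = val y) (st : Finset ι × (ι → β)) (hst : st.1.card = 1) :
    fillStep near val st x = fillStep near val st y := by
  obtain ⟨S, w⟩ := st
  obtain ⟨j, rfl⟩ := Finset.card_eq_one.1 hst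
  have hS : ({j} : Finset ι).Nonempty := Finset.singleton_nonempty j
  simp only [fillStep, dif_pos hS, Finset.mem_singleton.1 (hnear x _ hS),
    Finset.mem_singleton.1 (hnear y _ hS), hxy]

end Nearest

section Queue

theorem IsSorting.pairwise_map_finRange {u : Word n} {σ : Equiv.Perm (Fin n)}
    (h : IsSorting u σ) : ((List.finRange n).map σ).Pairwise (u · ≤ u ·) :=
  List.pairwise_map.2 ((List.pairwise_lt_finRange n).imp fun hlt => h hlt.le)

theorem cdistR_eq_val_sub (i j : Fin n) : cdistR i j = (j - i : Fin n).val := by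
  rw [Fin.val_sub, cdistR]
  congr 1
  omega

theorem cdistL_eq_val_sub (i j : Fin n) : cdistL i j = (i - j : Fin n).val :=
  cdistR_eq_val_sub j i

theorem isCyclicDist_val_of_cocycle {ι : Type*} {e : ι → ι → Fin n}
    (hinj : ∀ i, Function.Injective (e i)) (hcocycle : ∀ x j s, e x s = e x j + e j s) :
    IsCyclicDist fun i j => (e i j).val where
  injective i := Fin.val_injective.comp (hinj i)
  add_of_le {x j s} h := by
    have hlt := (e j s).isLt
    rw [hcocycle x j s, Fin.val_add_eq_ite] at h ⊢
    split_ifs at h ⊢ <;> omega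

variable [NeZero n]

theorem isCyclicDist_cdistR : IsCyclicDist (cdistR : Fin n → Fin n → ℕ) := by
  rw [show (cdistR : Fin n → Fin n → ℕ) = _ from funext₂ cdistR_eq_val_sub]
  exact isCyclicDist_val_of_cocycle (e := fun i j : Fin n => j - i) (fun _ => sub_left_injective)
    (fun _ _ _ => by abel)

theorem isCyclicDist_cdistL : IsCyclicDist (cdistL : Fin n → Fin n → ℕ) := by
  rw [show (cdistL : Fin n → Fin n → ℕ) = _ from funext₂ cdistL_eq_val_sub]
  exact isCyclicDist_val_of_cocycle (e := fun i j : Fin n => i - j) (fun _ => sub_right_injective)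
    (fun _ _ _ => by abel)

theorem shiftR_cdistR (i j : Fin n) : shiftR i (cdistR i j) = j := by
  ext
  show (i.val + cdistR i j) % n = j.val
  rw [cdistR_eq_val_sub, ← Fin.val_add, add_sub_cancel]

theorem shiftL_cdistL (i j : Fin n) : shiftL i (cdistL i j) = j := by
  ext
  show (i.val + n - cdistL i j % n) % n = j.val
  rw [cdistL_eq_val_sub, Nat.mod_eq_of_lt (Fin.isLt _)]
  conv_rhs => rw [← sub_sub_cancel i j, Fin.val_sub]
  congr 1
  omega

theorem isNearest_firstRight (i : Fin n) (S : Finset (Fin n)) (h : S.Nonempty) :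
    IsNearest cdistR i S (firstRight i S h) :=
  isNearest_shift_min' (shiftR_cdistR i) h

theorem isNearest_firstLeft (i : Fin n) (S : Finset (Fin n)) (h : S.Nonempty) :
    IsNearest cdistL i S (firstLeft i S h) :=
  isNearest_shift_min' (shiftL_cdistL i) h

theorem firstRight_mem (i : Fin n) (S : Finset (Fin n)) (h : S.Nonempty) :
    firstRight i S h ∈ S :=
  (isNearest_firstRight i S h).1

theorem firstLeft_mem (i : Fin n) (S : Finset (Fin n)) (h : S.Nonempty) :
    firstLeft i S h ∈ S :=
  (isNearest_firstLeft i S h).1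

/-- The queue algorithm run along an arbitrary listing `C` of the sites, in place of
`(σ 0, …, σ (n - 1))`. -/
noncomputable def runQueue (q : Finset (Fin n)) (u : Word n) (C : List (Fin n)) : Word n :=
  let phaseII := (C.take q.card).foldl (fillStep firstRight u) (q, fun _ => 0)
  ((C.drop q.card).reverse.foldl (fillStep firstLeft (u · + 1)) (qᶜ, phaseII.2)).2

theorem queueActWith_eq_runQueue (q : Finset (Fin n)) (σ : Equiv.Perm (Fin n)) (u : Word n) :
    queueActWith q σ u = runQueue q u ((List.finRange n).map σ) := by
  simp only [queueActWith, runQueue, ← List.map_take, ← List.map_drop, ← List.map_reverse,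
    List.foldl_map]
  rfl

theorem runQueue_swap_of_card_eq (q : Finset (Fin n)) {u : Word n} {x y : Fin n}
    (hxy : u x = u y) {l₁ l₂ : List (Fin n)} (hlen : l₁.length + l₂.length + 2 = n)
    (hk : q.card = l₁.length + 1) :
    runQueue q u (l₁ ++ x :: y :: l₂) = runQueue q u (l₁ ++ y :: x :: l₂) := by
  have hxy' : u x + 1 = u y + 1 := by rw [hxy]
  have htake : ∀ a b, (l₁ ++ a :: b :: l₂).take q.card = l₁ ++ [a] := fun a b => by
    rw [List.take_append, List.take_of_length_le (by omega), hk, Nat.add_sub_cancel_left]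
    rfl
  have hdrop : ∀ a b, ((l₁ ++ a :: b :: l₂).drop q.card).reverse = l₂.reverse ++ [b] :=
    fun a b => by
      rw [List.drop_append, List.drop_eq_nil_of_le (by omega), hk, Nat.add_sub_cancel_left]
      simp
  -- the exchanged letters are the last ones of their phases, so only one site is left free
  have hcardII : (l₁.foldl (fillStep firstRight u) (q, fun _ => 0)).1.card = 1 := by
    rw [card_foldl_fillStep firstRight_mem]
    show q.card - l₁.length = 1
    omega
  have hcardI : ∀ w, (l₂.reverse.foldl (fillStep firstLeft (u · + 1)) (qᶜ, w)).1.card = 1 := by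
    intro w
    rw [card_foldl_fillStep firstLeft_mem]
    simp only [Finset.card_compl, Fintype.card_fin, List.length_reverse]
    omega
  simp only [runQueue, htake, hdrop, List.foldl_append, List.foldl_cons, List.foldl_nil]
  rw [fillStep_eq_of_card_eq_one firstRight_mem hxy _ hcardII,
    fillStep_eq_of_card_eq_one firstLeft_mem hxy'.symm _ (hcardI _)]

theorem runQueue_swap (q : Finset (Fin n)) (u : Word n) {l l' : List (Fin n)}
    (h : SwapStep u l l') (hl : l.length = n) : runQueue q u l = runQueue q u l' := by
  obtain @⟨l₁, l₂, x, y, hxy⟩ := h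
  have hlen : l₁.length + l₂.length + 2 = n := by simpa [← add_assoc] using hl
  have hxy' : u x + 1 = u y + 1 := by rw [hxy]
  rcases lt_trichotomy q.card (l₁.length + 1) with hk | hk | hk
  · have htake : ∀ r, (l₁ ++ r).take q.card = l₁.take q.card := fun r => by
      rw [List.take_append, Nat.sub_eq_zero_of_le (by omega), List.take_zero, List.append_nil]
    have hdrop : ∀ a b, ((l₁ ++ a :: b :: l₂).drop q.card).reverse
        = l₂.reverse ++ b :: a :: (l₁.drop q.card).reverse := fun a b => by
      rw [List.drop_append, Nat.sub_eq_zero_of_le (by omega), List.drop_zero]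
      simp
    simp only [runQueue, htake, hdrop]
    rw [foldl_append_swap (fillStep_comm isCyclicDist_cdistL isNearest_firstLeft hxy'.symm)]
  · exact runQueue_swap_of_card_eq q hxy hlen hk
  · obtain ⟨j, hj⟩ : ∃ j, q.card = l₁.length + 2 + j := ⟨q.card - l₁.length - 2, by omega⟩
    have htake : ∀ a b, (l₁ ++ a :: b :: l₂).take q.card = l₁ ++ a :: b :: l₂.take j :=
      fun a b => by
        rw [List.take_append, List.take_of_length_le (by omega), hj, add_assoc,
          Nat.add_sub_cancel_left, add_comm]
        rfl
    have hdrop : ∀ a b, (l₁ ++ a :: b :: l₂).drop q.card = l₂.drop j := fun a b => by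
      rw [List.drop_append, List.drop_eq_nil_of_le (by omega), hj, add_assoc,
        Nat.add_sub_cancel_left, add_comm]
      rfl
    simp only [runQueue, htake, hdrop]
    rw [foldl_append_swap (fillStep_comm isCyclicDist_cdistR isNearest_firstRight hxy)]

end Queue

/-- The outcome of the two-phase queue algorithm does not depend on the choice of the
ordering permutation, as long as it sorts the letters of `u` weakly increasingly. -/
theorem queue_act_order_independent {n : ℕ} [NeZero n] (q : Finset (Fin n)) (u : Word n)
    (σ τ : Equiv.Perm (Fin n)) (hσ : IsSorting u σ) (hτ : IsSorting u τ) :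
    queueActWith q σ u = queueActWith q τ u := by
  rw [queueActWith_eq_runQueue, queueActWith_eq_runQueue]
  exact eq_of_perm_of_swapStep_invariant (fun _ _ h hl => runQueue_swap q u h hl)
    (σ.map_finRange_perm.trans τ.map_finRange_perm.symm) hσ.pairwise_map_finRange
    hτ.pairwise_map_finRange (by simp)

end MLQ
end
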